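/- arXiv:1303.4079 — 2 statements merged into one kernel-verified Lean document; each statement's English description precedes it below -/
import Mathlib

section
/- Let l > 3 be a prime, G the Heisenberg group mod l as above, b = ((0,0),1), and σ the automorphism of G fixing (ℤ/lℤ)² and sending b ↦ ((0,1),0)·b. Then any subgroup N ⊆ G with σ(N) = N and b ∈ N equals G. -/
/-- The automorphism of `(ℤ/lℤ)²` given by the unipotent matrix `[[1,1],[0,1]]`
raised to the `n`-th power, i.e. `(x, y) ↦ (x + n·y, y)`. -/
def heisAut (l : ℕ) (n : ZMod l) : (ZMod l × ZMod l) ≃+ (ZMod l × ZMod l) where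
  toFun p := (p.1 + n * p.2, p.2)
  invFun p := (p.1 - n * p.2, p.2)
  left_inv p := by cases p; simp
  right_inv p := by cases p; simp
  map_add' p q := by cases p; cases q; simp [Prod.ext_iff]; ring

/-- The action of `ℤ/lℤ` on `(ℤ/lℤ)²` (written multiplicatively) through the
unipotent matrix `[[1,1],[0,1]]`. -/
def heisHom (l : ℕ) :
    Multiplicative (ZMod l) →* MulAut (Multiplicative (ZMod l × ZMod l)) :=
  MonoidHom.mk' (fun n => AddEquiv.toMultiplicative (heisAut l n.toAdd))
    (by
      intro a b
      ext p
      · show (Multiplicative.toAdd p).1 + (Multiplicative.toAdd a + Multiplicative.toAdd b)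
            * (Multiplicative.toAdd p).2 = (Multiplicative.toAdd p).1
            + Multiplicative.toAdd b * (Multiplicative.toAdd p).2
            + Multiplicative.toAdd a * (Multiplicative.toAdd p).2
        ring
      · rfl)

/-- The Heisenberg group mod `l`: the semidirect product
`((ℤ/lℤ) × (ℤ/lℤ)) ⋊ ℤ/lℤ` where the generator acts by `[[1,1],[0,1]]`. -/
def Heis (l : ℕ) : Type :=
  SemidirectProduct (Multiplicative (ZMod l × ZMod l)) (Multiplicative (ZMod l)) (heisHom l)

instance (l : ℕ) : Group (Heis l) :=
  inferInstanceAs (Group (SemidirectProduct _ _ _))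

/-!
Conjugation by `b` sends `(0,1)` to `(1,1)`, so `b` and `(0,1)` generate the Heisenberg group.
Both lie in `N`: `b` by assumption and `(0,1) = σ(b)·b⁻¹` by `σ`-stability.
-/

open Multiplicative

lemma ZMod.ofAdd_eq_ofAdd_one_zpow {n : ℕ} (x : ZMod n) :
    ofAdd x = ofAdd (1 : ZMod n) ^ (x.cast : ℤ) := by
  rw [← ofAdd_zsmul, zsmul_one, ZMod.intCast_zmod_cast]

lemma ZMod.ofAdd_prod_eq_zpow_mul_zpow {n : ℕ} (x y : ZMod n) :
    ofAdd (x, y) = ofAdd ((1 : ZMod n), (0 : ZMod n)) ^ (x.cast : ℤ)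
      * ofAdd ((0 : ZMod n), (1 : ZMod n)) ^ (y.cast : ℤ) := by
  simp [← ofAdd_zsmul, ← ofAdd_add]

namespace Heis

open SemidirectProduct

variable {l : ℕ}

/- `Heis l` is not reducible, so rewriting lemmas are stated on the underlying semidirect
product. -/
local notation "SD" l:max => Multiplicative (ZMod l × ZMod l) ⋊[heisHom l] Multiplicative (ZMod l)

lemma inr_mul_inl_mul_inr_inv (n x y : ZMod l) :
    (inr (ofAdd n) * inl (ofAdd (x, y)) * (inr (ofAdd n))⁻¹ : SD l)
      = inl (ofAdd (x + n * y, y)) := by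
  rw [← map_inv, ← inl_aut]
  rfl

theorem eq_top_of_inr_one_mem_of_inl_zero_one_mem (H : Subgroup (SD l))
    (hb : inr (ofAdd 1) ∈ H) (hc : inl (ofAdd ((0 : ZMod l), (1 : ZMod l))) ∈ H) : H = ⊤ := by
  have hd : inl (ofAdd ((1 : ZMod l), (0 : ZMod l))) ∈ H := by
    have h := H.mul_mem (H.mul_mem (H.mul_mem hb hc) (H.inv_mem hb)) (H.inv_mem hc)
    rwa [inr_mul_inl_mul_inr_inv, ← map_inv, ← map_mul, ← ofAdd_neg, ← ofAdd_add,
      zero_add, one_mul, Prod.mk_add_mk, Prod.neg_mk, neg_zero, add_zero, add_neg_cancel] at h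
  have hinl (z : ZMod l × ZMod l) : inl (ofAdd z) ∈ H := by
    rw [ZMod.ofAdd_prod_eq_zpow_mul_zpow, map_mul, map_zpow, map_zpow]
    exact H.mul_mem (H.zpow_mem hd _) (H.zpow_mem hc _)
  have hinr (n : ZMod l) : inr (ofAdd n) ∈ H := by
    rw [ZMod.ofAdd_eq_ofAdd_one_zpow, map_zpow]
    exact H.zpow_mem hb _
  refine eq_top_iff.2 fun g _ => ?_
  rw [← inl_left_mul_inr_right g]
  exact H.mul_mem (hinl _) (hinr _)

end Heis

theorem stmt_7_general (l : ℕ)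
    (σ : MulAut (Heis l))
    (hb : σ (SemidirectProduct.inr (Multiplicative.ofAdd (1 : ZMod l)))
        = SemidirectProduct.inl (Multiplicative.ofAdd ((0 : ZMod l), (1 : ZMod l)))
            * SemidirectProduct.inr (Multiplicative.ofAdd (1 : ZMod l)))
    (N : Subgroup (Heis l))
    (hstable : Subgroup.map σ.toMonoidHom N = N)
    (hbN : SemidirectProduct.inr (Multiplicative.ofAdd (1 : ZMod l)) ∈ N) :
    N = ⊤ := by
  have hσb : σ (SemidirectProduct.inr (Multiplicative.ofAdd (1 : ZMod l))) ∈ N :=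
    hstable ▸ Subgroup.mem_map_of_mem σ.toMonoidHom hbN
  rw [hb] at hσb
  exact Heis.eq_top_of_inr_one_mem_of_inl_zero_one_mem N hbN
    ((N.mul_mem_cancel_right hbN).1 hσb)

/-- For a prime `l > 3`, if `σ` is the automorphism of the Heisenberg group
mod `l` fixing `(ℤ/lℤ)²` pointwise with `σ(b) = ((0,1),0)·b`, then any
subgroup `N` with `σ(N) = N` and `b ∈ N` equals the whole group. -/
theorem stmt_7 (l : ℕ) (hl : Nat.Prime l) (hl3 : 3 < l)
    (σ : MulAut (Heis l))
    (hfix : ∀ z : ZMod l × ZMod l,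
        σ (SemidirectProduct.inl (Multiplicative.ofAdd z))
          = SemidirectProduct.inl (Multiplicative.ofAdd z))
    (hb : σ (SemidirectProduct.inr (Multiplicative.ofAdd (1 : ZMod l)))
        = SemidirectProduct.inl (Multiplicative.ofAdd ((0 : ZMod l), (1 : ZMod l)))
            * SemidirectProduct.inr (Multiplicative.ofAdd (1 : ZMod l)))
    (N : Subgroup (Heis l))
    (hstable : Subgroup.map σ.toMonoidHom N = N)
    (hbN : SemidirectProduct.inr (Multiplicative.ofAdd (1 : ZMod l)) ∈ N) :
    N = ⊤ :=
  stmt_7_general l σ hb N hstable hbN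
end

section
/- Let k be a perfect field of characteristic p > 0, l/k a finite separable field extension, A ⊆ B an inclusion of commutative k-algebras with B reduced. If x ∈ B ⊗_k l satisfies x^{p^n} ∈ A ⊗ 1 (the image of A under a ↦ a⊗1) for some n ≥ 0, then x ∈ B ⊗ 1. -/
/-!
Because `l/k` is separable, the `p ^ n`-th powers of a `k`-basis `v` of `l` form again a basis `w`
(`Module.Basis.mapPowExpCharPowOfIsSeparable`). Writing `x = ∑ cᵢ ⊗ vᵢ`, Frobenius additivity gives
`x ^ p ^ n = ∑ cᵢ ^ p ^ n ⊗ wᵢ`. Choose `v` to contain `1`; then `w` contains `1` at the same index,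
so if `x ^ p ^ n ∈ B ⊗ 1` every coordinate `cᵢ` off that index is nilpotent, hence zero in the
reduced ring `B`.
-/

open scoped TensorProduct
open Module

theorem Module.Basis.baseChange_repr_tmul_one {k l ι : Type*} [CommSemiring k] [Semiring l]
    [Algebra k l] (B : Type*) [Semiring B] [Algebra k B] {v : Basis ι k l} {i₀ : ι}
    (hv : v i₀ = 1) (b : B) :
    (v.baseChange B).repr (b ⊗ₜ 1) = Finsupp.single i₀ b := by
  classical
  ext i
  rw [Basis.baseChange_repr_tmul, ← hv, Basis.repr_self, Finsupp.single_apply,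
    Finsupp.single_apply]
  split_ifs <;> simp

theorem Module.Basis.mapPowExpCharPowOfIsSeparable_baseChange_repr_pow {k l ι : Type*} [Field k]
    [Field l] [Algebra k l] [Algebra.IsSeparable k l] (B : Type*) [CommSemiring B] [Algebra k B]
    (p n : ℕ) [ExpChar k p] [ExpChar (B ⊗[k] l) p] (v : Basis ι k l) (x : B ⊗[k] l) (i : ι) :
    ((v.mapPowExpCharPowOfIsSeparable p n).baseChange B).repr (x ^ p ^ n) i =
      (v.baseChange B).repr x i ^ p ^ n := by
  have hq : p ^ n ≠ 0 := (expChar_pow_pos k p n).ne'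
  let c := (v.baseChange B).repr x
  suffices x ^ p ^ n = Finsupp.linearCombination B
      ((v.mapPowExpCharPowOfIsSeparable p n).baseChange B) (c.mapRange (· ^ p ^ n) (zero_pow hq)) by
    rw [this, Basis.repr_linearCombination, Finsupp.mapRange_apply]
  conv_lhs => rw [← (v.baseChange B).linearCombination_repr x]
  rw [Finsupp.linearCombination_apply, Finsupp.linearCombination_apply,
    Finsupp.sum_mapRange_index (by simp), Finsupp.sum, Finsupp.sum, sum_pow_char_pow]
  refine Finset.sum_congr rfl fun i _ => ?_
  simp [c, smul_pow, Algebra.TensorProduct.tmul_pow, Basis.mapPowExpCharPowOfIsSeparable]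

theorem TensorProduct.exists_eq_tmul_one_of_pow_eq_tmul_one {k l B : Type*} [Field k] [Field l]
    [Algebra k l] [Algebra.IsSeparable k l] (p : ℕ) [ExpChar k p] [CommRing B] [Algebra k B]
    [IsReduced B] {x : B ⊗[k] l} {n : ℕ} {b : B} (hx : x ^ p ^ n = b ⊗ₜ 1) :
    ∃ c : B, x = c ⊗ₜ 1 := by
  nontriviality B ⊗[k] l
  have := expChar_of_injective_algebraMap (algebraMap k (B ⊗[k] l)).injective p
  have h1 : LinearIndepOn k id ({1} : Set l) := .singleton one_ne_zero
  let v := Basis.extend h1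
  let i₀ : h1.extend (Set.subset_univ _) := ⟨1, Basis.subset_extend h1 rfl⟩
  have hv : v i₀ = 1 := Basis.extend_apply_self h1 i₀
  have hw : v.mapPowExpCharPowOfIsSeparable p n i₀ = 1 := by
    simp [Basis.mapPowExpCharPowOfIsSeparable, hv]
  refine ⟨(v.baseChange B).repr x i₀, (v.baseChange B).repr.injective ?_⟩
  rw [Basis.baseChange_repr_tmul_one B hv]
  ext i
  by_cases hi : i = i₀
  · simp [hi]
  · have hpow := Basis.mapPowExpCharPowOfIsSeparable_baseChange_repr_pow B p n v x i
    rw [hx, Basis.baseChange_repr_tmul_one B hw, Finsupp.single_eq_of_ne hi] at hpow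
    rw [Finsupp.single_eq_of_ne hi]
    exact IsNilpotent.eq_zero ⟨_, hpow.symm⟩

theorem stmt_11_general (k l : Type*) [Field k] [Field l] [Algebra k l]
    [Algebra.IsSeparable k l]
    (p : ℕ) [Fact p.Prime] [CharP k p]
    (A B : Type*) [CommRing A] [CommRing B] [Algebra k A] [Algebra k B]
    [IsReduced B]
    (f : A →ₐ[k] B)
    (x : B ⊗[k] l) (n : ℕ)
    (hx : ∃ a : A, x ^ p ^ n = (f a) ⊗ₜ[k] (1 : l)) :
    ∃ b : B, x = b ⊗ₜ[k] (1 : l) := by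
  obtain ⟨a, ha⟩ := hx
  exact TensorProduct.exists_eq_tmul_one_of_pow_eq_tmul_one p ha

/-- Let `k` be a perfect field of characteristic `p > 0`, `l/k` a finite
separable field extension, `A ⊆ B` an inclusion of commutative `k`-algebras
with `B` reduced.  If `x ∈ B ⊗_k l` satisfies `x^{p^n} ∈ A ⊗ 1` for some `n`,
then `x ∈ B ⊗ 1`. -/
theorem stmt_11 (k l : Type*) [Field k] [Field l] [Algebra k l]
    [FiniteDimensional k l] [Algebra.IsSeparable k l]
    (p : ℕ) [Fact p.Prime] [CharP k p] [PerfectRing k p]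
    (A B : Type*) [CommRing A] [CommRing B] [Algebra k A] [Algebra k B]
    [IsReduced B]
    (f : A →ₐ[k] B) (hf : Function.Injective f)
    (x : B ⊗[k] l) (n : ℕ)
    (hx : ∃ a : A, x ^ p ^ n = (f a) ⊗ₜ[k] (1 : l)) :
    ∃ b : B, x = b ⊗ₜ[k] (1 : l) :=
  stmt_11_general k l p A B f x n hx
end
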